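/- arXiv:1708.07627 — 4 statements merged into one kernel-verified Lean document; each statement's English description precedes it below -/
import Mathlib

section
/- Let X̂ be a Banach space, X_h ⊂ X̂ a complete subspace with {0} ≠ X_h ≠ X̂, and let Ĝ : X̂ → X̂ be a bounded linear projection (Ĝ² = Ĝ) with range X_h. Then ‖I − Ĝ‖ = ‖Ĝ‖, and for every x̂ ∈ X̂ and every x_h ∈ X_h one has ‖x̂ − Ĝx̂‖ = ‖(I−Ĝ)(x̂ − x_h)‖ ≤ ‖Ĝ‖ · ‖x̂ − x_h‖; in particular ‖x̂ − Ĝx̂‖ ≤ ‖Ĝ‖ · dist(x̂, X_h). -/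
/-!
Write `x = u + v` with `u = P x` in the range of the idempotent `P` and `v = x - P x` in its
kernel. In a real inner product space the vector `w = (‖v‖/‖u‖) • u + (‖u‖/‖v‖) • v` has the
same norm as `x` (the cross terms agree because the two coefficients multiply to `1`), while
`P w = (‖v‖/‖u‖) • u` has norm `‖v‖`. Hence `‖x - P x‖ = ‖P w‖ ≤ ‖P‖ ‖x‖`, i.e.
`‖1 - P‖ ≤ ‖P‖`, and applying this to the idempotent `1 - P` gives equality.
-/

open Metric

theorem IsIdempotentElem.one_le_norm {R : Type*} [NonUnitalNormedRing R] {p : R}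
    (hp : IsIdempotentElem p) (h0 : p ≠ 0) : 1 ≤ ‖p‖ := by
  have hpos : 0 < ‖p‖ := norm_pos_iff.mpr h0
  have : ‖p‖ * 1 ≤ ‖p‖ * ‖p‖ := by
    simpa only [mul_one, hp.eq] using norm_mul_le p p
  exact le_of_mul_le_mul_left this hpos

theorem norm_div_smul_add_div_smul_eq_norm_add {E : Type*} [NormedAddCommGroup E]
    [InnerProductSpace ℝ E] {u v : E} (hu : u ≠ 0) (hv : v ≠ 0) :
    ‖(‖v‖ / ‖u‖) • u + (‖u‖ / ‖v‖) • v‖ = ‖u + v‖ := by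
  have hu' : ‖u‖ ≠ 0 := norm_ne_zero_iff.mpr hu
  have hv' : ‖v‖ ≠ 0 := norm_ne_zero_iff.mpr hv
  refine (sq_eq_sq₀ (norm_nonneg _) (norm_nonneg _)).mp ?_
  rw [norm_add_sq_real, norm_add_sq_real, real_inner_smul_left, real_inner_smul_right,
    norm_smul, norm_smul, Real.norm_of_nonneg (by positivity),
    Real.norm_of_nonneg (by positivity)]
  field_simp
  ring

section Idempotent

variable {E : Type*} [NormedAddCommGroup E] [InnerProductSpace ℝ E] {P : E →L[ℝ] E}

theorem IsIdempotentElem.norm_sub_apply_le (hP : IsIdempotentElem P) (h0 : P ≠ 0) (x : E) :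
    ‖x - P x‖ ≤ ‖P‖ * ‖x‖ := by
  have hPP : P (P x) = P x := DFunLike.congr_fun hP.eq x
  have hPv : P (x - P x) = 0 := by rw [map_sub, hPP, sub_self]
  by_cases hu : P x = 0
  · simpa only [hu, sub_zero, one_mul] using
      mul_le_mul_of_nonneg_right (hP.one_le_norm h0) (norm_nonneg x)
  by_cases hv : x - P x = 0
  · rw [hv, norm_zero]
    positivity
  set u := P x
  set v := x - P x
  set w := (‖v‖ / ‖u‖) • u + (‖u‖ / ‖v‖) • v
  have hPw : P w = (‖v‖ / ‖u‖) • u := by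
    rw [map_add, map_smul, map_smul, hPP, hPv, smul_zero, add_zero]
  have hnorm_Pw : ‖P w‖ = ‖v‖ := by
    rw [hPw, norm_smul, Real.norm_of_nonneg (by positivity),
      div_mul_cancel₀ _ (norm_ne_zero_iff.mpr hu)]
  calc ‖v‖ = ‖P w‖ := hnorm_Pw.symm
    _ ≤ ‖P‖ * ‖w‖ := P.le_opNorm w
    _ = ‖P‖ * ‖x‖ := by
      rw [norm_div_smul_add_div_smul_eq_norm_add hu hv, add_sub_cancel]

theorem IsIdempotentElem.norm_one_sub_le (hP : IsIdempotentElem P) (h0 : P ≠ 0) :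
    ‖1 - P‖ ≤ ‖P‖ :=
  (1 - P).opNorm_le_bound (norm_nonneg P) (hP.norm_sub_apply_le h0)

theorem IsIdempotentElem.norm_one_sub (hP : IsIdempotentElem P) (h0 : P ≠ 0) (h1 : P ≠ 1) :
    ‖1 - P‖ = ‖P‖ := by
  refine le_antisymm (hP.norm_one_sub_le h0) ?_
  simpa only [sub_sub_cancel] using hP.one_sub.norm_one_sub_le (sub_ne_zero.mpr h1.symm)

end Idempotent

theorem le_mul_infDist {α : Type*} [PseudoMetricSpace α] {x : α} {s : Set α} {a c : ℝ}
    (hc : 0 < c) (hs : s.Nonempty) (h : ∀ y ∈ s, a ≤ c * dist x y) : a ≤ c * infDist x s := by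
  rw [← div_le_iff₀' hc, le_infDist hs]
  intro y hy
  rw [div_le_iff₀' hc]
  exact h y hy

theorem oblique_projection_bound_general
    {H : Type*} [NormedAddCommGroup H] [InnerProductSpace ℝ H]
    (Xh : Submodule ℝ H)
    (hbot : Xh ≠ ⊥) (htop : Xh ≠ ⊤)
    (G : H →L[ℝ] H)
    (hidem : ∀ x : H, G (G x) = G x)
    (hrange : Set.range G = (Xh : Set H)) :
    ‖ContinuousLinearMap.id ℝ H - G‖ = ‖G‖ ∧
      (∀ (x : H), ∀ xh ∈ Xh,
        ‖x - G x‖ = ‖(x - xh) - G (x - xh)‖ ∧ ‖x - G x‖ ≤ ‖G‖ * ‖x - xh‖) ∧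
      (∀ x : H, ‖x - G x‖ ≤ ‖G‖ * infDist x (Xh : Set H)) := by
  have hG : IsIdempotentElem G := ContinuousLinearMap.ext hidem
  have hfix : ∀ xh ∈ Xh, G xh = xh := by
    intro xh hxh
    obtain ⟨y, rfl⟩ : xh ∈ Set.range G := hrange ▸ hxh
    exact hidem y
  have hG0 : G ≠ 0 := by
    rintro rfl
    exact hbot ((Submodule.eq_bot_iff Xh).mpr fun xh hxh => (hfix xh hxh).symm)
  have hG1 : G ≠ 1 := by
    rintro rfl
    exact htop (SetLike.coe_injective (hrange.symm.trans (Set.range_id)))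
  have hshift : ∀ x, ∀ xh ∈ Xh, ‖x - G x‖ = ‖(x - xh) - G (x - xh)‖ := by
    intro x xh hxh
    rw [map_sub, hfix xh hxh, sub_sub_sub_cancel_right]
  have hbound : ∀ x, ∀ xh ∈ Xh, ‖x - G x‖ ≤ ‖G‖ * ‖x - xh‖ := fun x xh hxh =>
    (hshift x xh hxh).trans_le (hG.norm_sub_apply_le hG0 _)
  refine ⟨hG.norm_one_sub hG0 hG1, fun x xh hxh => ⟨hshift x xh hxh, hbound x xh hxh⟩,
    fun x => ?_⟩
  refine le_mul_infDist (zero_lt_one.trans_le (hG.one_le_norm hG0)) ⟨0, Xh.zero_mem⟩ ?_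
  intro xh hxh
  rw [dist_eq_norm]
  exact hbound x xh hxh

theorem oblique_projection_bound
    {H : Type*} [NormedAddCommGroup H] [InnerProductSpace ℝ H] [CompleteSpace H]
    (Xh : Submodule ℝ H) (hcl : IsClosed (Xh : Set H))
    (hbot : Xh ≠ ⊥) (htop : Xh ≠ ⊤)
    (G : H →L[ℝ] H)
    (hidem : ∀ x : H, G (G x) = G x)
    (hrange : Set.range G = (Xh : Set H)) :
    ‖ContinuousLinearMap.id ℝ H - G‖ = ‖G‖ ∧
      (∀ (x : H), ∀ xh ∈ Xh,
        ‖x - G x‖ = ‖(x - xh) - G (x - xh)‖ ∧ ‖x - G x‖ ≤ ‖G‖ * ‖x - xh‖) ∧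
      (∀ x : H, ‖x - G x‖ ≤ ‖G‖ * infDist x (Xh : Set H)) :=
  oblique_projection_bound_general Xh hbot htop G hidem hrange
end

section
/- Let X, Y be real Banach spaces, N : X → Y* defined by N(x) = Ax − F + Γ(x,x,·) with A ∈ L(X;Y*), F ∈ Y*, and Γ : X×X×Y → ℝ a bounded trilinear form. Let u ∈ X be a regular solution, i.e. N(u) = 0 and the bilinear form DN(u;·,·) = a + b, where a(x,y) = ⟨Ax,y⟩ and b = Γ(u,·,·) + Γ(·,u,·), satisfies the inf-sup condition with constant β > 0. Then for any ξ ∈ X with ‖Γ‖·‖u−ξ‖_X < β one has ‖u − ξ‖_X ≤ ‖N(ξ)‖_{Y*} / (β − ‖Γ‖·‖u−ξ‖_X). -/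
/-!
Write `e = u - ξ`. Since `N` is quadratic and `N(u) = 0`, Taylor's expansion at `u` is exact:
`N(ξ) = -DN(u) e + Γ(e, e, ·)`. Hence `‖DN(u) e‖ ≤ ‖N(ξ)‖ + ‖Γ‖ ‖e‖²`, and the inf-sup bound
`β ‖e‖ ≤ ‖DN(u) e‖` rearranges to `(β - ‖Γ‖ ‖e‖) ‖e‖ ≤ ‖N(ξ)‖`.
-/

section QuadraticMap

variable {𝕜 X Z : Type*} [NontriviallyNormedField 𝕜]
  [NormedAddCommGroup X] [NormedSpace 𝕜 X] [NormedAddCommGroup Z] [NormedSpace 𝕜 Z]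

theorem quadratic_residual_eq_of_root (A : X →L[𝕜] Z) (Γ : X →L[𝕜] X →L[𝕜] Z) {F : Z} {u : X}
    (hu : A u + Γ u u = F) (ξ : X) :
    A ξ + Γ ξ ξ - F = Γ (u - ξ) (u - ξ) - (A (u - ξ) + Γ u (u - ξ) + Γ.flip u (u - ξ)) := by
  rw [← hu]
  simp only [ContinuousLinearMap.flip_apply, map_sub, sub_apply]
  abel

theorem norm_linearization_le_of_root (A : X →L[𝕜] Z) (Γ : X →L[𝕜] X →L[𝕜] Z) {F : Z} {u : X}
    (hu : A u + Γ u u = F) (ξ : X) :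
    ‖A (u - ξ) + Γ u (u - ξ) + Γ.flip u (u - ξ)‖ ≤
      ‖A ξ + Γ ξ ξ - F‖ + ‖Γ‖ * ‖u - ξ‖ * ‖u - ξ‖ := by
  have hlin : A (u - ξ) + Γ u (u - ξ) + Γ.flip u (u - ξ) =
      Γ (u - ξ) (u - ξ) - (A ξ + Γ ξ ξ - F) := by
    rw [quadratic_residual_eq_of_root A Γ hu ξ, sub_sub_cancel]
  calc ‖A (u - ξ) + Γ u (u - ξ) + Γ.flip u (u - ξ)‖
      ≤ ‖Γ (u - ξ) (u - ξ)‖ + ‖A ξ + Γ ξ ξ - F‖ := hlin ▸ norm_sub_le _ _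
    _ ≤ ‖Γ‖ * ‖u - ξ‖ * ‖u - ξ‖ + ‖A ξ + Γ ξ ξ - F‖ := by gcongr; exact Γ.le_opNorm₂ _ _
    _ = ‖A ξ + Γ ξ ξ - F‖ + ‖Γ‖ * ‖u - ξ‖ * ‖u - ξ‖ := add_comm _ _

end QuadraticMap

theorem le_div_sub_mul_of_mul_le_add {t r β c : ℝ} (h : β * t ≤ r + c * t * t) (hc : c * t < β) :
    t ≤ r / (β - c * t) := by
  rw [le_div_iff₀ (sub_pos.mpr hc)]
  linarith

theorem abstract_reliability_general
    {X Y : Type*} [NormedAddCommGroup X] [NormedSpace ℝ X]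
    [NormedAddCommGroup Y] [NormedSpace ℝ Y]
    (A : X →L[ℝ] StrongDual ℝ Y) (F : StrongDual ℝ Y)
    (Γ : X →L[ℝ] X →L[ℝ] StrongDual ℝ Y)   -- bounded trilinear form on X×X×Y
    (u : X)
    (hu : A u + Γ u u = F)                       -- N(u) = 0
    (β : ℝ)
    -- inf-sup condition for DN(u;ξ,y) = a(ξ,y) + Γ(u,ξ,y) + Γ(ξ,u,y)
    (hinfsup : ∀ x : X, β * ‖x‖ ≤ ‖A x + Γ u x + Γ.flip u x‖)
    (ξ : X) (hclose : @norm _ (@ContinuousLinearMap.hasOpNorm ℝ ℝ X (X →L[ℝ] StrongDual ℝ Y) _ _ _ _ _ _ (RingHom.id ℝ)) Γ * ‖u - ξ‖ < β) :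
    ‖u - ξ‖ ≤ ‖A ξ + Γ ξ ξ - F‖ / (β - @norm _ (@ContinuousLinearMap.hasOpNorm ℝ ℝ X (X →L[ℝ] StrongDual ℝ Y) _ _ _ _ _ _ (RingHom.id ℝ)) Γ * ‖u - ξ‖) :=
  le_div_sub_mul_of_mul_le_add ((hinfsup _).trans (norm_linearization_le_of_root A Γ hu ξ)) hclose

theorem abstract_reliability
    {X Y : Type*} [NormedAddCommGroup X] [NormedSpace ℝ X]
    [NormedAddCommGroup Y] [NormedSpace ℝ Y]
    (A : X →L[ℝ] StrongDual ℝ Y) (F : StrongDual ℝ Y)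
    (Γ : X →L[ℝ] X →L[ℝ] StrongDual ℝ Y)   -- bounded trilinear form on X×X×Y
    (u : X)
    (hu : A u + Γ u u = F)                       -- N(u) = 0
    (β : ℝ) (hβ : 0 < β)
    -- inf-sup condition for DN(u;ξ,y) = a(ξ,y) + Γ(u,ξ,y) + Γ(ξ,u,y)
    (hinfsup : ∀ x : X, β * ‖x‖ ≤ ‖A x + Γ u x + Γ.flip u x‖)
    (ξ : X) (hclose : @norm _ (@ContinuousLinearMap.hasOpNorm ℝ ℝ X (X →L[ℝ] StrongDual ℝ Y) _ _ _ _ _ _ (RingHom.id ℝ)) Γ * ‖u - ξ‖ < β) :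
    ‖u - ξ‖ ≤ ‖A ξ + Γ ξ ξ - F‖ / (β - @norm _ (@ContinuousLinearMap.hasOpNorm ℝ ℝ X (X →L[ℝ] StrongDual ℝ Y) _ _ _ _ _ _ (RingHom.id ℝ)) Γ * ‖u - ξ‖) :=
  abstract_reliability_general A F Γ u hu β hinfsup ξ hclose
end

section
/- (Abstract reliability–efficiency) In the setting of the semilinear abstract framework, let u be a regular solution to N(u) = 0 with inf-sup constant β > 0 for DN(u), let Q ∈ L(X_h; X) satisfy (H4): ‖x_h − Qx_h‖_{X̂} ≤ Λ₄ dist_{X̂}(x_h, X) for all x_h ∈ X_h. Then any v_h ∈ X_h with ‖u − Qv_h‖_X < β/‖Γ‖ satisfies: (i) ‖u − v_h‖_{X̂} ≤ ‖N(Qv_h)‖_{Y*}/(β − ‖Γ‖·‖u − Qv_h‖_X) + ‖Qv_h − v_h‖_{X̂}; (ii) ‖Qv_h − v_h‖_{X̂} ≤ Λ₄ ‖u − v_h‖_{X̂}; (iii) ‖N(Qv_h)‖_{Y*} ≤ (1+Λ₄)(‖DN(u)‖ + β)·‖u − v_h‖_{X̂}. -/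
/-!
Writing `v = Q vₕ`, the condition `N(u) = 0` turns the residual into
`N(v) = DN(u)(v - u) + Γ(v - u, v - u, ·)`. The inf-sup condition bounds the linear part from
below by `β‖u - v‖` and the quadratic part is at most `‖Γ‖‖u - v‖²`, which gives reliability in `X`
as long as `‖Γ‖‖u - v‖ < β`; bounding both parts from above gives efficiency. Hypothesis (H4),
tested against the point `u ∈ X`, controls `‖Q vₕ - vₕ‖` by `‖u - vₕ‖`, and the triangle inequality
transfers both estimates from `u - Q vₕ` to `u - vₕ`.
-/

open Metric

lemma mul_lt_of_lt_div_of_nonneg {a b c : ℝ} (hc : 0 ≤ c) (ha : 0 ≤ a) (h : a < b / c) :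
    c * a < b := by
  rcases hc.eq_or_lt with rfl | hc
  · rw [div_zero] at h
    exact absurd h ha.not_gt
  · exact (lt_div_iff₀' hc).mp h

section QuadraticResidual

variable {E G : Type*} [NormedAddCommGroup E] [NormedSpace ℝ E]
  [NormedAddCommGroup G] [NormedSpace ℝ G]
  {A : E →L[ℝ] G} {Γ : E →L[ℝ] E →L[ℝ] G} {F : G} {u : E}

lemma quadratic_residual_eq (hu : A u + Γ u u = F) (v : E) :
    A v + Γ v v - F = (A (v - u) + Γ u (v - u) + Γ.flip u (v - u)) + Γ (v - u) (v - u) := by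
  rw [← hu]
  simp only [map_sub, sub_apply, ContinuousLinearMap.flip_apply]
  abel

lemma inf_sup_sub_mul_norm_le_quadratic_residual (hu : A u + Γ u u = F) {β nΓ : ℝ}
    (hinfsup : ∀ x, β * ‖x‖ ≤ ‖A x + Γ u x + Γ.flip u x‖)
    (hΓ : ∀ x ξ, ‖Γ x ξ‖ ≤ nΓ * ‖x‖ * ‖ξ‖) (v : E) :
    (β - nΓ * ‖u - v‖) * ‖u - v‖ ≤ ‖A v + Γ v v - F‖ := by
  have hlin := hinfsup (v - u)
  have hquad := hΓ (v - u) (v - u)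
  rw [quadratic_residual_eq hu v, norm_sub_rev u v]
  have htri := norm_sub_le
    (A (v - u) + Γ u (v - u) + Γ.flip u (v - u) + Γ (v - u) (v - u)) (Γ (v - u) (v - u))
  rw [add_sub_cancel_right] at htri
  linarith

lemma norm_quadratic_residual_le (hu : A u + Γ u u = F) {β nΓ : ℝ}
    (hΓ : ∀ x ξ, ‖Γ x ξ‖ ≤ nΓ * ‖x‖ * ‖ξ‖) {v : E} (hv : nΓ * ‖u - v‖ ≤ β) :
    ‖A v + Γ v v - F‖ ≤ (‖A + Γ u + Γ.flip u‖ + β) * ‖u - v‖ := by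
  have hlin : ‖A (v - u) + Γ u (v - u) + Γ.flip u (v - u)‖
      ≤ ‖A + Γ u + Γ.flip u‖ * ‖v - u‖ := (A + Γ u + Γ.flip u).le_opNorm (v - u)
  have hquad := hΓ (v - u) (v - u)
  have hsmall : nΓ * ‖u - v‖ * ‖u - v‖ ≤ β * ‖u - v‖ :=
    mul_le_mul_of_nonneg_right hv (norm_nonneg _)
  rw [quadratic_residual_eq hu v]
  rw [norm_sub_rev v u] at hlin hquad
  linarith [norm_add_le (A (v - u) + Γ u (v - u) + Γ.flip u (v - u)) (Γ (v - u) (v - u))]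

end QuadraticResidual

lemma norm_sub_le_mul_norm_sub_of_le_mul_infDist {V : Type*} [NormedAddCommGroup V]
    {S : Set V} {x q y : V} {Λ : ℝ} (hΛ : 0 ≤ Λ) (hy : y ∈ S)
    (h : ‖x - q‖ ≤ Λ * infDist x S) : ‖q - x‖ ≤ Λ * ‖y - x‖ := by
  have hdist : infDist x S ≤ ‖y - x‖ := by
    simpa only [dist_eq_norm, norm_sub_rev] using infDist_le_dist_of_mem (x := x) hy
  rw [norm_sub_rev]
  exact h.trans (mul_le_mul_of_nonneg_left hdist hΛ)

theorem abstract_reliability_efficiency_general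
    {Xhat Y : Type*} [NormedAddCommGroup Xhat] [NormedSpace ℝ Xhat]
    [NormedAddCommGroup Y] [NormedSpace ℝ Y]
    (X Xd : Submodule ℝ Xhat)
    (A : ↥X →L[ℝ] StrongDual ℝ Y) (F : StrongDual ℝ Y)
    (Γ : ↥X →L[ℝ] ↥X →L[ℝ] StrongDual ℝ Y)
    -- nΓ = ‖Γ‖, the operator norm of the bounded trilinear form Γ
    (nΓ : ℝ)
    (hnΓ : IsLeast {c : ℝ | 0 ≤ c ∧ ∀ x ξ : ↥X, ‖Γ x ξ‖ ≤ c * ‖x‖ * ‖ξ‖} nΓ)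
    (u : ↥X)
    (hu : A u + Γ u u = F)                       -- N(u) = 0
    (β : ℝ)
    (hinfsup : ∀ x : ↥X, β * ‖x‖ ≤ ‖A x + Γ u x + Γ.flip u x‖)
    (Q : ↥Xd →L[ℝ] ↥X) (Λ₄ : ℝ) (hΛ₄ : 0 ≤ Λ₄)
    -- (H4)
    (H4 : ∀ xh : ↥Xd,
      ‖(xh : Xhat) - ((Q xh : ↥X) : Xhat)‖ ≤ Λ₄ * infDist (xh : Xhat) (X : Set Xhat))
    (vh : ↥Xd) (hclose : ‖u - Q vh‖ < β / nΓ) :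
    -- (3.11) reliability
    (‖(u : Xhat) - (vh : Xhat)‖ ≤
        ‖A (Q vh) + Γ (Q vh) (Q vh) - F‖ / (β - nΓ * ‖u - Q vh‖) +
          ‖((Q vh : ↥X) : Xhat) - (vh : Xhat)‖) ∧
    -- (3.12)
    (‖((Q vh : ↥X) : Xhat) - (vh : Xhat)‖ ≤ Λ₄ * ‖(u : Xhat) - (vh : Xhat)‖) ∧
    -- (3.13) efficiency
    (‖A (Q vh) + Γ (Q vh) (Q vh) - F‖ ≤
        (1 + Λ₄) * (‖A + Γ u + Γ.flip u‖ + β) * ‖(u : Xhat) - (vh : Xhat)‖) := by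
  obtain ⟨⟨hnΓ0, hΓ⟩, -⟩ := hnΓ
  have hsmall : nΓ * ‖u - Q vh‖ < β := mul_lt_of_lt_div_of_nonneg hnΓ0 (norm_nonneg _) hclose
  have hgap : 0 < β - nΓ * ‖u - Q vh‖ := sub_pos.mpr hsmall
  have hnormX : ‖u - Q vh‖ = ‖(u : Xhat) - ((Q vh : ↥X) : Xhat)‖ := by norm_cast
  have hQ : ‖((Q vh : ↥X) : Xhat) - (vh : Xhat)‖ ≤ Λ₄ * ‖(u : Xhat) - (vh : Xhat)‖ :=
    norm_sub_le_mul_norm_sub_of_le_mul_infDist hΛ₄ u.2 (H4 vh)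
  have hreliable : ‖u - Q vh‖ ≤ ‖A (Q vh) + Γ (Q vh) (Q vh) - F‖ / (β - nΓ * ‖u - Q vh‖) :=
    (le_div_iff₀' hgap).mpr
      (inf_sup_sub_mul_norm_le_quadratic_residual hu hinfsup hΓ (Q vh))
  have hvia_Q := norm_sub_le_norm_sub_add_norm_sub (u : Xhat) ((Q vh : ↥X) : Xhat) (vh : Xhat)
  have hvia_vh := norm_sub_le_norm_sub_add_norm_sub (u : Xhat) (vh : Xhat) ((Q vh : ↥X) : Xhat)
  rw [norm_sub_rev (vh : Xhat)] at hvia_vh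
  refine ⟨by linarith, hQ, ?_⟩
  calc ‖A (Q vh) + Γ (Q vh) (Q vh) - F‖
      ≤ (‖A + Γ u + Γ.flip u‖ + β) * ‖u - Q vh‖ := norm_quadratic_residual_le hu hΓ hsmall.le
    _ ≤ (‖A + Γ u + Γ.flip u‖ + β) * ((1 + Λ₄) * ‖(u : Xhat) - (vh : Xhat)‖) := by
        gcongr
        · linarith [norm_nonneg (A + Γ u + Γ.flip u), mul_nonneg hnΓ0 (norm_nonneg (u - Q vh))]
        · linarith
    _ = (1 + Λ₄) * (‖A + Γ u + Γ.flip u‖ + β) * ‖(u : Xhat) - (vh : Xhat)‖ := by ring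

theorem abstract_reliability_efficiency
    {Xhat Y : Type*} [NormedAddCommGroup Xhat] [NormedSpace ℝ Xhat]
    [NormedAddCommGroup Y] [NormedSpace ℝ Y]
    (X Xd : Submodule ℝ Xhat)
    (A : ↥X →L[ℝ] StrongDual ℝ Y) (F : StrongDual ℝ Y)
    (Γ : ↥X →L[ℝ] ↥X →L[ℝ] StrongDual ℝ Y)
    -- nΓ = ‖Γ‖, the operator norm of the bounded trilinear form Γ
    (nΓ : ℝ)
    (hnΓ : IsLeast {c : ℝ | 0 ≤ c ∧ ∀ x ξ : ↥X, ‖Γ x ξ‖ ≤ c * ‖x‖ * ‖ξ‖} nΓ)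
    (u : ↥X)
    (hu : A u + Γ u u = F)                       -- N(u) = 0
    (β : ℝ) (hβ : 0 < β)
    (hinfsup : ∀ x : ↥X, β * ‖x‖ ≤ ‖A x + Γ u x + Γ.flip u x‖)
    (Q : ↥Xd →L[ℝ] ↥X) (Λ₄ : ℝ) (hΛ₄ : 0 ≤ Λ₄)
    -- (H4)
    (H4 : ∀ xh : ↥Xd,
      ‖(xh : Xhat) - ((Q xh : ↥X) : Xhat)‖ ≤ Λ₄ * infDist (xh : Xhat) (X : Set Xhat))
    (vh : ↥Xd) (hclose : ‖u - Q vh‖ < β / nΓ) :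
    -- (3.11) reliability
    (‖(u : Xhat) - (vh : Xhat)‖ ≤
        ‖A (Q vh) + Γ (Q vh) (Q vh) - F‖ / (β - nΓ * ‖u - Q vh‖) +
          ‖((Q vh : ↥X) : Xhat) - (vh : Xhat)‖) ∧
    -- (3.12)
    (‖((Q vh : ↥X) : Xhat) - (vh : Xhat)‖ ≤ Λ₄ * ‖(u : Xhat) - (vh : Xhat)‖) ∧
    -- (3.13) efficiency
    (‖A (Q vh) + Γ (Q vh) (Q vh) - F‖ ≤
        (1 + Λ₄) * (‖A + Γ u + Γ.flip u‖ + β) * ‖(u : Xhat) - (vh : Xhat)‖) :=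
  abstract_reliability_efficiency_general X Xd A F Γ nΓ hnΓ u hu β hinfsup Q Λ₄ hΛ₄ H4 vh hclose
end

section
/- (Best-approximation for the semilinear problem) In the abstract semilinear framework, let u be a regular solution, suppose (H1)–(H4) give the discrete inf-sup constant β₁ := α̂β̂ − (δ₁+δ₂+δ₃) > 0 for DN̂(u)|_{X_h×Y_h}, and let u_h ∈ X_h solve N_h(u_h) = 0 with e := u − u_h satisfying 4‖Γ̂‖·‖e‖_{X̂} ≤ β₁. Then, with C_qo := (4/3)·max{1/β₁, 1 + ‖DN̂(u)‖/β₁}, one has ‖u − u_h‖_{X̂} ≤ C_qo ( min_{v_h ∈ X_h} ‖u − v_h‖_{X̂} + ‖N̂(u)‖_{Y_h*} ). In particular, if Y_h ⊂ Y (conforming test space), then ‖N̂(u)‖_{Y_h*} = 0 and the method is quasi-optimal. -/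
/-!
Since `N̂` is quadratic, its Taylor expansion at `u` is exact:
`N̂(u_h) = N̂(u) - DN̂(u) e + Γ̂(e, e)`. Testing on `Y_h`, where `N̂(u_h)` vanishes, bounds
`‖DN̂(u) e‖_{Y_h*}` by `‖N̂(u)‖_{Y_h*} + ‖Γ̂‖‖e‖² ≤ ‖N̂(u)‖_{Y_h*} + β₁‖e‖/4`. For `v_h ∈ X_h`,
the discrete inf-sup condition applied to `v_h - u_h = (v_h - u) + e`, together with
`‖e‖ ≤ ‖u - v_h‖ + ‖v_h - u_h‖`, lets the term `β₁‖e‖/4` be absorbed, leaving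
`(3/4)‖e‖` on the left; then minimize over `v_h`.
-/

open Metric

theorem le_mul_infDist_add {α : Type*} [PseudoMetricSpace α] {x : α} {s : Set α}
    (hs : s.Nonempty) {a C r : ℝ} (hC : 0 < C) (h : ∀ y ∈ s, a ≤ C * (dist x y + r)) :
    a ≤ C * (infDist x s + r) := by
  rw [← div_le_iff₀' hC, ← sub_le_iff_le_add, infDist_eq_iInf]
  have := hs.to_subtype
  exact le_ciInf fun y => by rw [sub_le_iff_le_add, div_le_iff₀' hC]; exact h y y.2

section

variable {𝕜 E F G : Type*} [NontriviallyNormedField 𝕜]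
  [NormedAddCommGroup E] [NormedSpace 𝕜 E] [NormedAddCommGroup F] [NormedSpace 𝕜 F]
  [NormedAddCommGroup G] [NormedSpace 𝕜 G]

theorem ContinuousLinearMap.norm_comp_subtypeL_le (φ : F →L[𝕜] G) (K : Submodule 𝕜 F) :
    ‖φ.comp K.subtypeL‖ ≤ ‖φ‖ :=
  (φ.opNorm_comp_le _).trans (mul_le_of_le_one_right (norm_nonneg _) K.norm_subtypeL_le)

theorem quadratic_taylor (A : E →L[𝕜] F) (Γ : E →L[𝕜] E →L[𝕜] F) (f : F) (u w : E) :
    (A + Γ u + Γ.flip u) (u - w) =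
      (A u + Γ u u - f) - (A w + Γ w w - f) + Γ (u - w) (u - w) := by
  simp only [map_sub, sub_apply, add_apply, ContinuousLinearMap.flip_apply]
  abel

theorem norm_derivative_comp_subtypeL_le (A : E →L[𝕜] F →L[𝕜] G)
    (Γ : E →L[𝕜] E →L[𝕜] F →L[𝕜] G) (f : F →L[𝕜] G) (Yd : Submodule 𝕜 F) {u w : E}
    (hw : (A w + Γ w w - f).comp Yd.subtypeL = 0) :
    ‖((A + Γ u + Γ.flip u) (u - w)).comp Yd.subtypeL‖ ≤
      ‖(A u + Γ u u - f).comp Yd.subtypeL‖ + ‖Γ (u - w) (u - w)‖ := by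
  rw [quadratic_taylor A Γ f u w, ContinuousLinearMap.add_comp, ContinuousLinearMap.sub_comp, hw,
    sub_zero]
  exact (norm_add_le _ _).trans (add_le_add_right ((Γ _ _).norm_comp_subtypeL_le Yd) _)

theorem infSup_mul_norm_sub_le (B : E →L[𝕜] F →L[𝕜] G) (Xd : Submodule 𝕜 E)
    (Yd : Submodule 𝕜 F) {β : ℝ}
    (hdis : ∀ xh : Xd, β * ‖xh‖ ≤ ‖(B.bilinearComp Xd.subtypeL Yd.subtypeL) xh‖)
    (u : E) (uh vh : Xd) :
    β * ‖(vh : E) - uh‖ ≤ ‖B‖ * ‖u - vh‖ + ‖(B (u - uh)).comp Yd.subtypeL‖ := by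
  have hsplit : (B.bilinearComp Xd.subtypeL Yd.subtypeL) (vh - uh) =
      (B ((vh : E) - u)).comp Yd.subtypeL + (B (u - uh)).comp Yd.subtypeL := by
    rw [← ContinuousLinearMap.add_comp, ← map_add, sub_add_sub_cancel]
    rfl
  calc β * ‖(vh : E) - uh‖ = β * ‖vh - uh‖ := by rw [Submodule.coe_norm, Submodule.coe_sub]
    _ ≤ ‖(B ((vh : E) - u)).comp Yd.subtypeL‖ + ‖(B (u - uh)).comp Yd.subtypeL‖ :=
        (hdis _).trans (hsplit ▸ norm_add_le _ _)
    _ ≤ ‖B‖ * ‖u - vh‖ + ‖(B (u - uh)).comp Yd.subtypeL‖ := by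
        rw [norm_sub_rev u (vh : E)]
        exact add_le_add_left (((B _).norm_comp_subtypeL_le Yd).trans (B.le_opNorm _)) _

theorem norm_sub_le_of_infSup (B : E →L[𝕜] F →L[𝕜] G) (Xd : Submodule 𝕜 E)
    (Yd : Submodule 𝕜 F) {β r : ℝ} (hβ : 0 < β) (hr : 0 ≤ r)
    (hdis : ∀ xh : Xd, β * ‖xh‖ ≤ ‖(B.bilinearComp Xd.subtypeL Yd.subtypeL) xh‖)
    {u : E} {uh : Xd} (hres : ‖(B (u - uh)).comp Yd.subtypeL‖ ≤ r + β / 4 * ‖u - uh‖)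
    (vh : Xd) :
    ‖u - uh‖ ≤ 4 / 3 * max (1 / β) (1 + ‖B‖ / β) * (‖u - vh‖ + r) := by
  have hdiscrete := infSup_mul_norm_sub_le B Xd Yd hdis u uh vh
  have htri : ‖u - uh‖ ≤ ‖u - vh‖ + ‖(vh : E) - uh‖ := norm_sub_le_norm_sub_add_norm_sub _ _ _
  have hmain : 3 / 4 * ‖u - uh‖ ≤ (1 + ‖B‖ / β) * ‖u - vh‖ + 1 / β * r := by
    rw [← mul_le_mul_iff_right₀ hβ]
    field_simp
    nlinarith [norm_nonneg (u - vh)]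
  nlinarith [le_max_left (1 / β) (1 + ‖B‖ / β), le_max_right (1 / β) (1 + ‖B‖ / β),
    norm_nonneg (u - vh)]

end

theorem semilinear_best_approximation
    {Xhat Yhat : Type*} [NormedAddCommGroup Xhat] [NormedSpace ℝ Xhat]
    [NormedAddCommGroup Yhat] [NormedSpace ℝ Yhat]
    (X Xd : Submodule ℝ Xhat) (Y Yd : Submodule ℝ Yhat)
    (ahat : Xhat →L[ℝ] StrongDual ℝ Yhat) (Fhat : StrongDual ℝ Yhat)
    (Γhat : Xhat →L[ℝ] Xhat →L[ℝ] StrongDual ℝ Yhat)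
    (u : ↥X)
    -- N(u) = 0 : the regular solution, tested against Y
    (hu : ∀ y : ↥Y, ahat (u : Xhat) (y : Yhat) + Γhat (u : Xhat) (u : Xhat) (y : Yhat)
      = Fhat (y : Yhat))
    -- discrete inf-sup condition for DN̂(u)|_{X_h × Y_h} with constant β₁ > 0
    (β₁ : ℝ) (hβ₁ : 0 < β₁)
    (hdis : ∀ xh : ↥Xd, β₁ * ‖xh‖ ≤
      ‖((ahat + Γhat (u : Xhat) + Γhat.flip (u : Xhat)).bilinearComp
          Xd.subtypeL Yd.subtypeL) xh‖)
    -- the discrete solution u_h : N_h(u_h) = 0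
    (uh : ↥Xd)
    (huh : ∀ yh : ↥Yd, ahat (uh : Xhat) (yh : Yhat) +
      Γhat (uh : Xhat) (uh : Xhat) (yh : Yhat) = Fhat (yh : Yhat))
    (hsmall : 4 * @norm (Xhat →L[ℝ] Xhat →L[ℝ] StrongDual ℝ Yhat)
      (@ContinuousLinearMap.hasOpNorm ℝ ℝ Xhat (Xhat →L[ℝ] StrongDual ℝ Yhat) _ _ _ _ _ _
        (RingHom.id ℝ)) Γhat * ‖(u : Xhat) - (uh : Xhat)‖ ≤ β₁) :
    (‖(u : Xhat) - (uh : Xhat)‖ ≤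
      (4 / 3) * max (1 / β₁)
          (1 + ‖ahat + Γhat (u : Xhat) + Γhat.flip (u : Xhat)‖ / β₁) *
        (infDist (u : Xhat) (Xd : Set Xhat) +
          ‖(ahat (u : Xhat) + Γhat (u : Xhat) (u : Xhat) - Fhat).comp Yd.subtypeL‖)) ∧
    -- conforming case: if Y_h ⊂ Y then apx(𝒯) = ‖N̂(u)‖_{Y_h*} = 0
    (Yd ≤ Y →
      ‖(ahat (u : Xhat) + Γhat (u : Xhat) (u : Xhat) - Fhat).comp Yd.subtypeL‖ = 0) := by
  have hNuh : (ahat uh + Γhat uh uh - Fhat).comp Yd.subtypeL = 0 := by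
    ext yh
    simp [huh]
  have hΓ : ‖Γhat (u - uh) (u - uh)‖ ≤ β₁ / 4 * ‖(u : Xhat) - uh‖ :=
    (Γhat.le_opNorm₂ _ _).trans (by nlinarith [norm_nonneg ((u : Xhat) - uh)])
  have hres := (norm_derivative_comp_subtypeL_le ahat Γhat Fhat Yd hNuh).trans
    (add_le_add_right hΓ _)
  refine ⟨le_mul_infDist_add ⟨0, Xd.zero_mem⟩ (by positivity) fun vh hvh => ?_, fun hle => ?_⟩
  · rw [dist_eq_norm]
    exact norm_sub_le_of_infSup _ Xd Yd hβ₁ (ContinuousLinearMap.opNorm_nonneg _) hdis hres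
      ⟨vh, hvh⟩
  · rw [ContinuousLinearMap.opNorm_zero_iff]
    ext y
    simpa [sub_eq_zero] using hu ⟨y, hle y.2⟩
end
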